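/- (Policy switching improvement) Let Δ be a nonempty finite set of H-length policies. Define the policy-switching policy π_ps(Δ) by: for each x ∈ X and h ∈ {1,...,H}, π_ps(Δ)_h(x) = φ*_h(x) where φ* ∈ argmax_{φ ∈ Δ} V^φ_{H-h+1}(x). Then V^{π_ps(Δ)}_H(x) ≥ V^φ_H(x) for every φ ∈ Δ and every x ∈ X. -/

import Mathlib

open Finset

/-- A finite MDP with finite state set `X`, finite admissible action sets, reward `R`,
transition probabilities `P`, and discount factor `disc ∈ (0,1)`. -/
structure MDP (X A : Type) [Fintype X] [Fintype A] where
  Adm : X → Finset A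
  adm_nonempty : ∀ x, (Adm x).Nonempty
  R : X → A → ℝ
  P : A → X → X → ℝ
  P_nonneg : ∀ a x y, 0 ≤ P a x y
  P_sum : ∀ a x, ∑ y, P a x y = 1
  disc : ℝ
  disc_pos : 0 < disc
  disc_lt_one : disc < 1

variable {X A : Type} [Fintype X] [Fintype A]

/-- `h`-horizon value of the `H`-length policy `π` (entries `0`-indexed: the entry applied
at value-level `h ≥ 1` is the one at position `H - h`, i.e. 1-indexed position `H - h + 1`). -/
noncomputable def MDP.val (M : MDP X A) {H : ℕ} (π : Fin H → X → A) : ℕ → X → ℝ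
  | 0, _ => 0
  | h + 1, x =>
      if hlt : H - (h + 1) < H then
        M.R x (π ⟨H - (h + 1), hlt⟩ x) +
          M.disc * ∑ y, M.P (π ⟨H - (h + 1), hlt⟩ x) x y * MDP.val M π h y
      else 0

/-- The set `Π(X)^H` of admissible `H`-length policies. -/
def MDP.Pol (M : MDP X A) (H : ℕ) : Type :=
  { π : Fin H → X → A // ∀ m x, π m x ∈ M.Adm x }

instance (M : MDP X A) (H : ℕ) : Finite (M.Pol H) := Subtype.finite

noncomputable instance (M : MDP X A) (H : ℕ) : Fintype (M.Pol H) :=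
  Fintype.ofFinite _

instance (M : MDP X A) (H : ℕ) : Nonempty (M.Pol H) :=
  ⟨⟨fun _ x => (M.adm_nonempty x).choose, fun _ x => (M.adm_nonempty x).choose_spec⟩⟩

/-- Optimal `H`-horizon value function `V*_H`. -/
noncomputable def MDP.Vopt (M : MDP X A) (H : ℕ) (x : X) : ℝ :=
  Finset.univ.sup' Finset.univ_nonempty fun π : M.Pol H => M.val π.1 H x

/-- The value-iteration operator `T`. -/
noncomputable def MDP.T (M : MDP X A) (u : X → ℝ) (x : X) : ℝ :=
  (M.Adm x).sup' (M.adm_nonempty x) fun a => M.R x a + M.disc * ∑ y, M.P a x y * u y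

/-- Switchable action set `S^π_h(x)`. -/
def MDP.Sw (M : MDP X A) {H : ℕ} (π : Fin H → X → A) (h : ℕ) (x : X) : Set A :=
  { a | a ∈ M.Adm x ∧
      M.val π h x < M.R x a + M.disc * ∑ y, M.P a x y * M.val π (h - 1) y }

/-- Improvable-state set `I^{π,H}` of pairs `(h, x)` with `1 ≤ h ≤ H` and `S^π_h(x) ≠ ∅`. -/
def MDP.Imp (M : MDP X A) {H : ℕ} (π : Fin H → X → A) : Set (ℕ × X) :=
  { p | 1 ≤ p.1 ∧ p.1 ≤ H ∧ (M.Sw π p.1 p.2).Nonempty }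

/-- `φ >_H ψ` : `φ` strictly improves `ψ` over horizon `H`. -/
def MDP.StrictImp (M : MDP X A) {H : ℕ} (φ ψ : Fin H → X → A) : Prop :=
  (∀ x, M.val ψ H x ≤ M.val φ H x) ∧ ∃ s, M.val ψ H s < M.val φ H s

/-- `β^{π,H}` : all policies obtained from `π` by switching, on a nonempty subset
`I ⊆ I^{π,H}`, the prescribed action to a switchable one, keeping all other entries.
(The entry at 0-indexed position `m` is the one applied at value-level `H - m`.) -/
def MDP.beta (M : MDP X A) {H : ℕ} (π : Fin H → X → A) : Set (Fin H → X → A) :=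
  { π' | ∃ I : Set (ℕ × X), I.Nonempty ∧ I ⊆ M.Imp π ∧
      (∀ (m : Fin H) (x : X), (H - m.1, x) ∈ I → π' m x ∈ M.Sw π (H - m.1) x) ∧
      (∀ (m : Fin H) (x : X), (H - m.1, x) ∉ I → π' m x = π m x) }

/-- `β^{π,H}_x` : all policies obtained from `π` by switching actions only at state `x0`,
at a nonempty set `I` of improvable levels, keeping all other entries. -/
def MDP.betaAt (M : MDP X A) {H : ℕ} (π : Fin H → X → A) (x0 : X) : Set (Fin H → X → A) :=
  { π' | ∃ I : Set ℕ, I.Nonempty ∧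
      (∀ h ∈ I, 1 ≤ h ∧ h ≤ H ∧ (M.Sw π h x0).Nonempty) ∧
      (∀ m : Fin H, H - m.1 ∈ I → π' m x0 ∈ M.Sw π (H - m.1) x0) ∧
      (∀ (m : Fin H) (x : X), x ≠ x0 ∨ H - m.1 ∉ I → π' m x = π m x) }

/-! By backward induction on the horizon `h`: if `ps` is at least as good as every member of `Δ`
over `h` steps, then at level `h + 1` and state `x` the policy `φ ∈ Δ` chosen by the switching rule
already dominates the rest of `Δ`, and `ps` takes the same first action as `φ` but continues with
a value function that dominates `φ`'s, so by monotonicity of the one-step backup it does at least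
as well as `φ`. -/

namespace MDP

variable (M : MDP X A) {H : ℕ}

noncomputable def backup (u : X → ℝ) (x : X) (a : A) : ℝ :=
  M.R x a + M.disc * ∑ y, M.P a x y * u y

theorem backup_mono {u v : X → ℝ} (huv : ∀ y, u y ≤ v y) (x : X) (a : A) :
    M.backup u x a ≤ M.backup v x a := by
  unfold backup
  gcongr with y _
  · exact M.disc_pos.le
  · exact M.P_nonneg _ _ _
  · exact huv y

theorem val_succ (π : Fin H → X → A) {h : ℕ} (hh : h < H) (x : X) :
    M.val π (h + 1) x = M.backup (M.val π h) x (π ⟨H - (h + 1), by omega⟩ x) := by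
  simp only [val, dif_pos (show H - (h + 1) < H by omega)]
  rfl

theorem val_le_val_of_switching {Δ : Set (Fin H → X → A)} {ps : Fin H → X → A}
    (hps : ∀ (m : Fin H) (x : X), ∃ φ ∈ Δ,
      ps m x = φ m x ∧ ∀ ψ ∈ Δ, M.val ψ (H - m.1) x ≤ M.val φ (H - m.1) x) :
    ∀ h ≤ H, ∀ φ ∈ Δ, ∀ x, M.val φ h x ≤ M.val ps h x := by
  intro h
  induction h with
  | zero => intro _ φ _ x; simp [val]
  | succ h ih =>
    intro hh φ hφ x
    obtain ⟨φx, hφx, hps_eq, hφx_max⟩ := hps ⟨H - (h + 1), by omega⟩ x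
    have hlevel : H - (H - (h + 1)) = h + 1 := by omega
    calc M.val φ (h + 1) x ≤ M.val φx (h + 1) x := hlevel ▸ hφx_max φ hφ
      _ = M.backup (M.val φx h) x (ps ⟨H - (h + 1), by omega⟩ x) := by
        rw [M.val_succ φx (by omega), hps_eq]
      _ ≤ M.backup (M.val ps h) x (ps ⟨H - (h + 1), by omega⟩ x) :=
        M.backup_mono (fun y => ih (by omega) φx hφx y) x _
      _ = M.val ps (h + 1) x := (M.val_succ ps (by omega) x).symm

end MDP

theorem policy_switching_improvement_general (M : MDP X A) {H : ℕ}
    (Δ : Finset (M.Pol H)) (ps : M.Pol H)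
    (hps : ∀ (m : Fin H) (x : X), ∃ φ ∈ Δ,
      ps.1 m x = φ.1 m x ∧ ∀ ψ ∈ Δ, M.val ψ.1 (H - m.1) x ≤ M.val φ.1 (H - m.1) x) :
    ∀ φ ∈ Δ, ∀ x, M.val φ.1 H x ≤ M.val ps.1 H x := by
  intro φ hφ x
  refine M.val_le_val_of_switching (Δ := Subtype.val '' (Δ : Set (M.Pol H)))
    (fun m y => ?_) H le_rfl φ.1 ⟨φ, hφ, rfl⟩ x
  obtain ⟨φy, hφy, hps_eq, hφy_max⟩ := hps m y
  exact ⟨φy.1, ⟨φy, hφy, rfl⟩, hps_eq, by rintro _ ⟨ψ, hψ, rfl⟩; exact hφy_max ψ hψ⟩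

/-- policy switching over a nonempty finite set `Δ` of `H`-length policies
weakly dominates every member of `Δ` over horizon `H`. -/
theorem policy_switching_improvement (M : MDP X A) {H : ℕ}
    (Δ : Finset (M.Pol H)) (hΔ : Δ.Nonempty) (ps : M.Pol H)
    (hps : ∀ (m : Fin H) (x : X), ∃ φ ∈ Δ,
      ps.1 m x = φ.1 m x ∧ ∀ ψ ∈ Δ, M.val ψ.1 (H - m.1) x ≤ M.val φ.1 (H - m.1) x) :
    ∀ φ ∈ Δ, ∀ x, M.val φ.1 H x ≤ M.val ps.1 H x :=
  policy_switching_improvement_general M Δ ps hps
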